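/- Fix a system of positive coset-depending weights w. A game c = (c_1,…,c_n) is orthogonal (with respect to the inner product ⟨c,c'⟩ = Σ_{i=1}^n Σ_{s∈S} c_i(s)c'_i(s)) to every coset weighted potential game with respect to w if and only if both of the following hold: (i) for every strategy profile s ∈ S, Σ_{i=1}^n w_i(s_{-i}) c_i(s) = 0; and (ii) for every player i and every s_{-i} ∈ S_{-i}, Σ_{x∈S_i} c_i(x, s_{-i}) = 0. Such games are called coset weighted pure harmonic games. -/

import Mathlib

/-!
If `P` is a potential of `c'`, the defining identity says exactly that `c'ᵢ - wᵢ P` does not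
depend on player `i`'s own strategy. Hence `⟨c, c'⟩` splits into `Σ_s P(s) Σ_i wᵢ(s) cᵢ(s)`, which
vanishes by (i), and, for each `i`, a sum over `s_{-i}` of `(c'ᵢ - wᵢ P)(s_{-i}) Σ_x cᵢ(x, s_{-i})`,
which vanishes by (ii). Conversely, pairing `c` with the potential game `wᵢ 1_s` (potential `1_s`)
gives the sum in (i) at `s`, and pairing it with the non-strategic game whose only nonzero payoff is
player `i`'s indicator of the coset of `s_{-i}` (potential `0`) gives the sum in (ii).
-/

/-- `f : S → ℝ` depends only on the strategies of the players other than `i`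
(i.e. it is a function of `s_{-i}`). -/
def IndepOf {n : ℕ} {k : Fin n → ℕ} (i : Fin n) (f : (∀ j, Fin (k j)) → ℝ) : Prop :=
  ∀ (s : ∀ j, Fin (k j)) (x : Fin (k i)), f (Function.update s i x) = f s

/-- `P` is a coset weighted potential function for the game `c` with respect to the
coset-depending weights `w`. -/
def IsCWPotentialFn {n : ℕ} {k : Fin n → ℕ} (c w : Fin n → (∀ j, Fin (k j)) → ℝ)
    (P : (∀ j, Fin (k j)) → ℝ) : Prop :=
  ∀ (i : Fin n) (s : ∀ j, Fin (k j)) (x y : Fin (k i)),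
    c i (Function.update s i x) - c i (Function.update s i y)
      = w i s * (P (Function.update s i x) - P (Function.update s i y))

/-- `c` is a coset weighted potential game with respect to `w`. -/
def IsCWPG {n : ℕ} {k : Fin n → ℕ} (w c : Fin n → (∀ j, Fin (k j)) → ℝ) : Prop :=
  ∃ P, IsCWPotentialFn c w P

/-- `c` is a coset weighted pure potential game w.r.t. `w`:
`c_i(s) = w_i(s_{-i}) (P(s) − (1/k_i) Σ_{x ∈ S_i} P(x, s_{-i}))` for some `P`. -/
def IsCWPurePotential {n : ℕ} {k : Fin n → ℕ}
    (w c : Fin n → (∀ j, Fin (k j)) → ℝ) : Prop :=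
  ∃ P : (∀ j, Fin (k j)) → ℝ, ∀ (i : Fin n) (s : ∀ j, Fin (k j)),
    c i s = w i s * (P s - (1 / (k i : ℝ)) * ∑ x : Fin (k i), P (Function.update s i x))

/-- `c` is a non-strategic game. -/
def IsNonStrategic {n : ℕ} {k : Fin n → ℕ} (c : Fin n → (∀ j, Fin (k j)) → ℝ) : Prop :=
  ∀ (i : Fin n) (s : ∀ j, Fin (k j)) (x y : Fin (k i)),
    c i (Function.update s i x) = c i (Function.update s i y)

/-- The inner product `⟨c, c'⟩ = Σ_i Σ_s c_i(s) c'_i(s)` on the space of games. -/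
noncomputable def gameInner {n : ℕ} {k : Fin n → ℕ}
    (c c' : Fin n → (∀ j, Fin (k j)) → ℝ) : ℝ :=
  ∑ i : Fin n, ∑ s : ∀ j, Fin (k j), c i s * c' i s

/-- `c` is a coset weighted pure harmonic game w.r.t. `w`: it is orthogonal to every
coset weighted potential game w.r.t. `w`. -/
def IsCWPureHarmonic {n : ℕ} {k : Fin n → ℕ}
    (w c : Fin n → (∀ j, Fin (k j)) → ℝ) : Prop :=
  ∀ c' : Fin n → (∀ j, Fin (k j)) → ℝ, IsCWPG w c' → gameInner c c' = 0

section PiSum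

variable {ι : Type*} [DecidableEq ι] {α : ι → Type*}

theorem Equiv.piSplitAt_symm_eq_update (i : ι) (x y : α i) (q : ∀ j : {j // j ≠ i}, α j) :
    (Equiv.piSplitAt i α).symm (x, q)
      = Function.update ((Equiv.piSplitAt i α).symm (y, q)) i x := by
  funext j
  by_cases hj : j = i
  · subst hj
    simp
  · simp [hj]

variable [Fintype ι] [∀ i, Fintype (α i)]

theorem sum_mul_eq_zero_of_sum_update_eq_zero {R : Type*} [NonUnitalNonAssocSemiring R]
    {f g : (∀ j, α j) → R} (i : ι) (hf : ∀ s, ∑ x, f (Function.update s i x) = 0)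
    (hg : ∀ s x, g (Function.update s i x) = g s) :
    ∑ s, f s * g s = 0 := by
  rw [← (Equiv.piSplitAt i α).symm.sum_comp, Fintype.sum_prod_type_right]
  refine Finset.sum_eq_zero fun q _ => ?_
  rcases isEmpty_or_nonempty (α i) with hα | ⟨⟨x₀⟩⟩
  · exact Fintype.sum_empty _
  obtain ⟨s, hs⟩ : ∃ s, ∀ x, (Equiv.piSplitAt i α).symm (x, q) = Function.update s i x :=
    ⟨_, fun x => Equiv.piSplitAt_symm_eq_update i x x₀ q⟩
  simp only [hs, hg, ← Finset.sum_mul, hf, zero_mul]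

theorem sum_filter_update_eq_sum_update [∀ i, DecidableEq (α i)] {M : Type*} [AddCommMonoid M]
    (f : (∀ j, α j) → M) (i : ι) (s₀ : ∀ j, α j) :
    ∑ s with Function.update s i (s₀ i) = s₀, f s = ∑ x, f (Function.update s₀ i x) := by
  symm
  refine Finset.sum_nbij' (fun x => Function.update s₀ i x) (fun s => s i) ?_ ?_ ?_ ?_ ?_
  · simp
  · simp
  · simp
  · intro s hs
    rw [← (Finset.mem_filter_univ s).1 hs, Function.update_idem, Function.update_eq_self]
  · simp

end PiSum

section Games

variable {n : ℕ} {k : Fin n → ℕ}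

theorem isCWPotentialFn_iff_indepOf {w c : Fin n → (∀ j, Fin (k j)) → ℝ}
    {P : (∀ j, Fin (k j)) → ℝ} (hwI : ∀ i, IndepOf i (w i)) :
    IsCWPotentialFn c w P ↔ ∀ i, IndepOf i (fun s => c i s - w i s * P s) := by
  constructor
  · intro hP i s x
    have h := hP i s x (s i)
    rw [Function.update_eq_self] at h
    simp only [hwI i s x]
    linear_combination h
  · intro h i s x y
    have hx := h i s x
    have hy := h i s y
    simp only [hwI i s x, hwI i s y] at hx hy
    linear_combination hx - hy

theorem isCWPG_weight_mul {w : Fin n → (∀ j, Fin (k j)) → ℝ} (hwI : ∀ i, IndepOf i (w i))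
    (P : (∀ j, Fin (k j)) → ℝ) :
    IsCWPG w (fun i s => w i s * P s) :=
  ⟨P, (isCWPotentialFn_iff_indepOf hwI).2 fun i s x => by simp⟩

theorem isCWPG_of_indepOf {w c : Fin n → (∀ j, Fin (k j)) → ℝ} (hwI : ∀ i, IndepOf i (w i))
    (hc : ∀ i, IndepOf i (c i)) :
    IsCWPG w c :=
  ⟨0, (isCWPotentialFn_iff_indepOf hwI).2 fun i s x => by simpa using hc i s x⟩

theorem gameInner_single_right (c : Fin n → (∀ j, Fin (k j)) → ℝ) (i : Fin n)
    (f : (∀ j, Fin (k j)) → ℝ) :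
    gameInner c (Pi.single i f) = ∑ s, c i s * f s := by
  rw [gameInner, Fintype.sum_eq_single i fun j hj => by simp [Pi.single_eq_of_ne hj]]
  simp

theorem isCWPureHarmonic_of_sum_eq_zero {w c : Fin n → (∀ j, Fin (k j)) → ℝ}
    (hwI : ∀ i, IndepOf i (w i)) (hweighted : ∀ s, ∑ i, w i s * c i s = 0)
    (hcoset : ∀ i s, ∑ x : Fin (k i), c i (Function.update s i x) = 0) :
    IsCWPureHarmonic w c := by
  rintro c' ⟨P, hP⟩
  have hrest := (isCWPotentialFn_iff_indepOf hwI).1 hP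
  calc gameInner c c'
      = ∑ i, ∑ s, w i s * c i s * P s + ∑ i, ∑ s, c i s * (c' i s - w i s * P s) := by
        simp only [gameInner, ← Finset.sum_add_distrib]
        exact Finset.sum_congr rfl fun i _ => Finset.sum_congr rfl fun s _ => by ring
    _ = ∑ s, (∑ i, w i s * c i s) * P s + ∑ i, ∑ s, c i s * (c' i s - w i s * P s) := by
        rw [Finset.sum_comm]
        simp only [Finset.sum_mul]
    _ = 0 := by
        simp only [hweighted, zero_mul, Finset.sum_const_zero, zero_add]
        exact Finset.sum_eq_zero fun i _ =>
          sum_mul_eq_zero_of_sum_update_eq_zero i (hcoset i) (hrest i)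

theorem IsCWPureHarmonic.sum_weight_mul_eq_zero {w c : Fin n → (∀ j, Fin (k j)) → ℝ}
    (hwI : ∀ i, IndepOf i (w i)) (H : IsCWPureHarmonic w c)
    (s₀ : ∀ j, Fin (k j)) :
    ∑ i, w i s₀ * c i s₀ = 0 := by
  have h := H _ (isCWPG_weight_mul hwI (Pi.single s₀ 1))
  simpa [gameInner, Pi.single_apply, mul_comm] using h

theorem IsCWPureHarmonic.sum_update_eq_zero {w c : Fin n → (∀ j, Fin (k j)) → ℝ}
    (hwI : ∀ i, IndepOf i (w i)) (H : IsCWPureHarmonic w c)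
    (i₀ : Fin n) (s₀ : ∀ j, Fin (k j)) :
    ∑ x : Fin (k i₀), c i₀ (Function.update s₀ i₀ x) = 0 := by
  -- `Function.update s i₀ (s₀ i₀) = s₀` says that `s` and `s₀` agree off `i₀`
  set φ : (∀ j, Fin (k j)) → ℝ := fun s => if Function.update s i₀ (s₀ i₀) = s₀ then 1 else 0
  have hφ : IndepOf i₀ φ := fun s x => by simp [φ]
  have htest : IsCWPG w (Pi.single i₀ φ) := by
    refine isCWPG_of_indepOf hwI fun i => ?_
    rcases eq_or_ne i i₀ with rfl | hi
    · simpa using hφ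
    · simp [hi, IndepOf]
  have h := H _ htest
  simp only [gameInner_single_right, φ, mul_ite, mul_one, mul_zero, ← Finset.sum_filter] at h
  rwa [sum_filter_update_eq_sum_update] at h

end Games

theorem pure_harmonic_iff_general (n : ℕ) (k : Fin n → ℕ)
    (w : Fin n → (∀ j, Fin (k j)) → ℝ)
    (hwI : ∀ i, IndepOf i (w i))
    (c : Fin n → (∀ j, Fin (k j)) → ℝ) :
    (∀ c' : Fin n → (∀ j, Fin (k j)) → ℝ, IsCWPG w c' → gameInner c c' = 0) ↔
      ((∀ s : ∀ j, Fin (k j), ∑ i : Fin n, w i s * c i s = 0) ∧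
       (∀ (i : Fin n) (s : ∀ j, Fin (k j)),
          ∑ x : Fin (k i), c i (Function.update s i x) = 0)) :=
  ⟨fun H => ⟨IsCWPureHarmonic.sum_weight_mul_eq_zero hwI H,
      IsCWPureHarmonic.sum_update_eq_zero hwI H⟩,
    fun ⟨hweighted, hcoset⟩ => isCWPureHarmonic_of_sum_eq_zero hwI hweighted hcoset⟩

/-- **Theorem 3.6.** A game `c` is orthogonal to every coset weighted potential game
w.r.t. `w` iff `Σ_i w_i(s_{-i}) c_i(s) = 0` for every `s` and
`Σ_{x∈S_i} c_i(x, s_{-i}) = 0` for every `i` and `s_{-i}`. -/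
theorem pure_harmonic_iff (n : ℕ) (hn : 2 ≤ n) (k : Fin n → ℕ)
    (hk : ∀ i, 2 ≤ k i) (w : Fin n → (∀ j, Fin (k j)) → ℝ)
    (hw : ∀ i s, 0 < w i s) (hwI : ∀ i, IndepOf i (w i))
    (c : Fin n → (∀ j, Fin (k j)) → ℝ) :
    (∀ c' : Fin n → (∀ j, Fin (k j)) → ℝ, IsCWPG w c' → gameInner c c' = 0) ↔
      ((∀ s : ∀ j, Fin (k j), ∑ i : Fin n, w i s * c i s = 0) ∧
       (∀ (i : Fin n) (s : ∀ j, Fin (k j)),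
          ∑ x : Fin (k i), c i (Function.update s i x) = 0)) :=
  pure_harmonic_iff_general n k w hwI c
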